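/- arXiv:1409.2001 — 2 statements merged into one kernel-verified Lean document; each statement's English description precedes it below -/
import Mathlib

section
/- Let s : Z² → R^{4,1} with (s,s) ≡ 0 and (s,q) ≡ 1, let n be a Gauss map of s, i.e., (n,n) ≡ 1, (n,s) ≡ 0, (n,q) ≡ 0, and on each edge dn_{ij} + k_{ij} ds_{ij} = 0 for some scalar k_{ij}. If (s,n) has constant mean curvature H (meaning A(n,s) + H·A(s,s) = 0 on every elementary quadrilateral), then z := n + H·s satisfies (z,q) ≡ H, (z,z) ≡ 1, and A(z,s) = 0 on every elementary quadrilateral; in particular z is a Königs dual of s in the parallel affine subgeometry E⁴_H. -/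
/-- The Minkowski inner product of signature (4,1) on `ℝ^{4,1} = Fin 5 → ℝ`. -/
def mink (x y : Fin 5 → ℝ) : ℝ :=
  x 0 * y 0 + x 1 * y 1 + x 2 * y 2 + x 3 * y 3 - x 4 * y 4

/-- The wedge product `v ∧ w`, valued in the exterior algebra `Λ ℝ^5`. -/
noncomputable def wedge (v w : Fin 5 → ℝ) : ExteriorAlgebra ℝ (Fin 5 → ℝ) :=
  ExteriorAlgebra.ι ℝ v * ExteriorAlgebra.ι ℝ w

/-- The mixed area of two nets on the elementary quadrilateral with lower-left
vertex `p`: `A(f,g) = (1/4)(δf_{ik} ∧ δg_{jl} + δg_{ik} ∧ δf_{jl})`. -/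
noncomputable def MA (f g : ℤ × ℤ → Fin 5 → ℝ) (p : ℤ × ℤ) :
    ExteriorAlgebra ℝ (Fin 5 → ℝ) :=
  (4 : ℝ)⁻¹ • (wedge (f (p.1 + 1, p.2 + 1) - f p) (g (p.1, p.2 + 1) - g (p.1 + 1, p.2)) +
    wedge (g (p.1 + 1, p.2 + 1) - g p) (f (p.1, p.2 + 1) - f (p.1 + 1, p.2)))

/-- Two points of `ℤ²` are joined by an edge if they differ by a standard basis
vector. -/
def IsEdge (p p' : ℤ × ℤ) : Prop :=
  p' = (p.1 + 1, p.2) ∨ p' = (p.1, p.2 + 1)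

/-- If `(s,n)` has constant mixed-area mean curvature `H`, then `z = n + H s`
has `(z,q) ≡ H`, `(z,z) ≡ 1` and `A(z,s) ≡ 0`: `z` is a Königs dual of `s` in
the parallel affine subgeometry `E⁴_H`. -/
theorem stmt5 (q : Fin 5 → ℝ) (s n : ℤ × ℤ → Fin 5 → ℝ) (H : ℝ)
    (hs : ∀ p, mink (s p) (s p) = 0) (hsq : ∀ p, mink (s p) q = 1)
    (hn : ∀ p, mink (n p) (n p) = 1) (hns : ∀ p, mink (n p) (s p) = 0)
    (hnq : ∀ p, mink (n p) q = 0)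
    (hrod : ∀ p p', IsEdge p p' → ∃ k : ℝ, (n p' - n p) + k • (s p' - s p) = 0)
    (hcmc : ∀ p, MA n s p + H • MA s s p = 0) :
    (∀ p, mink (n p + H • s p) q = H) ∧
    (∀ p, mink (n p + H • s p) (n p + H • s p) = 1) ∧
    (∀ p, MA (fun p' => n p' + H • s p') s p = 0) := by
  refine ⟨fun p => ?_, fun p => ?_, fun p => ?_⟩
  · have h1 := hnq p; have h2 := hsq p
    simp only [mink, Pi.add_apply, Pi.smul_apply, smul_eq_mul] at *
    linear_combination h1 + H * h2
  · have h1 := hn p; have h2 := hns p; have h3 := hs p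
    simp only [mink, Pi.add_apply, Pi.smul_apply, smul_eq_mul] at *
    linear_combination h1 + 2 * H * h2 + H ^ 2 * h3
  · have key : MA (fun p' => n p' + H • s p') s p = MA n s p + H • MA s s p := by
      simp only [MA, wedge]
      have e : ∀ x y : ℤ × ℤ,
          (n x + H • s x) - (n y + H • s y) = (n x - n y) + H • (s x - s y) := by
        intro x y; module
      rw [e, e, map_add, map_smul, map_add, map_smul]
      simp only [add_mul, mul_add, smul_mul_assoc, mul_smul_comm, smul_add, smul_smul]
      module
    rw [key, hcmc p]
end

section
/- Under the assumptions of the previous statement and additionally that A(s,s*) = 0 and A(s,q) = 0 on every elementary quadrilateral (i.e., s* is a Königs dual of s and q is constant), the vector field t = s* + (c(q,q) − r)s − cq satisfies A(s, t) = (c(q,q) − r)·A(s,s). Consequently, if (t,t) > 0 and n := t/√(t,t), then A(s,n) + H·A(s,s) = 0 with the constant H = (r − c(q,q))/√(t,t); i.e., s has constant mixed-area mean curvature H with respect to n. -/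
lemma MA_add (f g h : ℤ × ℤ → Fin 5 → ℝ) (p : ℤ × ℤ) :
    MA f (fun p => g p + h p) p = MA f g p + MA f h p := by
  simp only [MA, wedge, add_sub_add_comm, map_add, mul_add, add_mul, ← smul_add]
  ring_nf
  module

lemma MA_smul (a : ℝ) (f g : ℤ × ℤ → Fin 5 → ℝ) (p : ℤ × ℤ) :
    MA f (fun p => a • g p) p = a • MA f g p := by
  simp only [MA, wedge, ← smul_sub, map_smul, smul_mul_assoc, mul_smul_comm, ← smul_add,
    smul_smul]
  ring_nf

/-- If moreover `s*` is a Königs dual of `s` (`A(s,s*) = 0`) and `A(s,q) = 0`,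
then `A(s,t) = (c(q,q) - r) A(s,s)`; hence for `n = t/√(t,t)` one has
`A(s,n) + H A(s,s) = 0` with `H = (r - c(q,q))/√(t,t)`: `s` has constant
mixed-area mean curvature. -/
theorem stmt9 (q : Fin 5 → ℝ) (r t c : ℝ) (s s' : ℤ × ℤ → Fin 5 → ℝ)
    (hs : ∀ p, mink (s p) (s p) = 0) (hsq : ∀ p, mink (s p) q = 1)
    (hs' : ∀ p, mink (s' p) (s' p) = t) (hs'q : ∀ p, mink (s' p) q = r)
    (hpar : ∀ p p', IsEdge p p' → ∃ lam : ℝ, s' p' - s' p = lam • (s p' - s p))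
    (hc : ∀ p, mink (s p) (s' p) = c)
    (hdual : ∀ p, MA s s' p = 0) (hq0 : ∀ p, MA s (fun _ => q) p = 0)
    (T : ℤ × ℤ → Fin 5 → ℝ)
    (hT : T = fun p => s' p + (c * mink q q - r) • s p - c • q) :
    (∀ p, MA s T p = (c * mink q q - r) • MA s s p) ∧
    (0 < t - 2 * r * c + mink q q * c ^ 2 →
      ∀ p, MA s (fun p' => (Real.sqrt (t - 2 * r * c + mink q q * c ^ 2))⁻¹ • T p') p +
        ((r - c * mink q q) / Real.sqrt (t - 2 * r * c + mink q q * c ^ 2)) • MA s s p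
          = 0) := by
  set lam := c * mink q q - r with hlam
  have key : ∀ p, MA s T p = lam • MA s s p := by
    intro p
    have hT' : T = fun p => (s' p + lam • s p) + (-c) • (fun _ : ℤ × ℤ => q) p := by
      funext p; simp [hT, sub_eq_add_neg, neg_smul]
    rw [hT', MA_add s (fun p => s' p + lam • s p) (fun p => (-c) • (fun _ : ℤ × ℤ => q) p) p,
      MA_add s s' (fun p => lam • s p) p, MA_smul, MA_smul, hdual p, hq0 p]
    simp
  refine ⟨key, fun hpos p => ?_⟩
  set D := t - 2 * r * c + mink q q * c ^ 2
  rw [MA_smul (Real.sqrt D)⁻¹ s T p, key p, smul_smul, ← add_smul]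
  have : (Real.sqrt D)⁻¹ * lam + (r - c * mink q q) / Real.sqrt D = 0 := by
    rw [hlam, div_eq_mul_inv]; ring
  rw [this, zero_smul]
end
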